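/- Let G = G(Q^n,p) be a random subgraph of the n-cube. Then almost surely λ1(G) ≥ (1+o(1))·max(√Δ(G), n·p); precisely, for every ε > 0, Pr[ λ1(G) ≥ (1−ε)·max(√Δ(G), n·p) ] tends to 1 as n → ∞, provided p(n) ≫ n^{-1}·2^{-n}. -/

import Mathlib

/-!
Both bounds come from the Rayleigh quotient: `x ⬝ᵥ A x ≤ λ₁ (x ⬝ᵥ x)` for the adjacency
matrix `A`. Weighting a vertex `v` of maximum degree `Δ` by `√Δ` and its neighbours by `1` gives
quotient `√Δ`, so `√Δ ≤ λ₁` for every graph. The all-ones vector gives `2 |E(G)| ≤ λ₁ 2ⁿ`.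
The number of edges of `G(Qⁿ,p)` is binomial with mean `N p`, `N = n 2ⁿ⁻¹`, and variance at
most `N p`, so by Chebyshev it is below `(1 - ε) N p` with probability at most
`1 / (ε² N p)`, which tends to `0` because `p n 2ⁿ → ∞`; outside that event `(1 - ε) n p ≤ λ₁`.
-/

open MeasureTheory Filter Asymptotics

noncomputable section

/-- The `n`-dimensional cube graph `Q^n`: vertices are vectors in `{0,1}^n`,
two vertices adjacent iff they differ in exactly one coordinate. -/
def cubeGraph (n : ℕ) : SimpleGraph (Fin n → Bool) where
  Adj x y := hammingDist x y = 1
  symm := ⟨fun x y h => by show hammingDist y x = 1; rwa [hammingDist_comm]⟩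
  loopless := ⟨fun x h => by simp [hammingDist_self] at h⟩

/-- The subgraph of the `n`-cube determined by a configuration `ω` of edge indicators:
an edge of `Q^n` is kept iff its indicator is `true`. -/
def randCube (n : ℕ) (ω : Sym2 (Fin n → Bool) → Bool) : SimpleGraph (Fin n → Bool) where
  Adj x y := (cubeGraph n).Adj x y ∧ ω s(x, y) = true
  symm := ⟨fun x y h => ⟨(cubeGraph n).adj_symm h.1, by rw [Sym2.eq_swap]; exact h.2⟩⟩
  loopless := ⟨fun x h => (cubeGraph n).irrefl h.1⟩

/-- The product Bernoulli(p) measure on edge-indicator configurations: each potential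
edge appears independently with probability `p`. -/
def cubeMeasure (n : ℕ) (p : ℝ) : Measure (Sym2 (Fin n → Bool) → Bool) :=
  Measure.pi fun _ => (PMF.bernoulli (min (Real.toNNReal p) 1) (min_le_right _ _)).toMeasure

/-- Degree of a vertex. -/
def deg {V : Type*} [Fintype V] (G : SimpleGraph V) (v : V) : ℕ := (G.neighborSet v).ncard

/-- Maximum degree. -/
def maxDeg {V : Type*} [Fintype V] (G : SimpleGraph V) : ℕ := ⨆ v, deg G v

/-- Adjacency matrix over ℝ. -/
def adjMat {V : Type*} [Fintype V] (G : SimpleGraph V) : Matrix V V ℝ :=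
  @SimpleGraph.adjMatrix ℝ V G (Classical.decRel _) _ _

theorem adjMat_isHermitian {V : Type*} [Fintype V] (G : SimpleGraph V) :
    (adjMat G).IsHermitian := by
  apply Matrix.ext
  intro i j
  simp only [adjMat, Matrix.conjTranspose_apply, SimpleGraph.adjMatrix_apply, star_trivial]
  by_cases h : G.Adj i j
  · rw [if_pos h, if_pos (G.adj_symm h)]
  · rw [if_neg h, if_neg (fun hji => h (G.adj_symm hji))]

/-- The largest eigenvalue of the adjacency matrix of `G`. -/
def lambda1 {V : Type*} [Fintype V] [DecidableEq V] (G : SimpleGraph V) : ℝ :=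
  ⨆ v, (adjMat_isHermitian G).eigenvalues v

/-- `κ(n) = max { k : 2^n C(n,k) p^k (1-p)^{n-k} ≥ 1 }`. -/
def kappa (n : ℕ) (p : ℝ) : ℕ :=
  sSup {k : ℕ | 1 ≤ (2 : ℝ) ^ n * n.choose k * p ^ k * (1 - p) ^ (n - k)}

open Finset Matrix RealInnerProductSpace ProbabilityTheory
open scoped ENNReal

theorem Matrix.IsHermitian.dotProduct_mulVec_le_iSup_eigenvalues_mul {m : Type*} [Fintype m]
    [DecidableEq m] {A : Matrix m m ℝ} (hA : A.IsHermitian) (x : m → ℝ) :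
    x ⬝ᵥ A *ᵥ x ≤ (⨆ i, hA.eigenvalues i) * (x ⬝ᵥ x) := by
  set b := hA.eigenvectorBasis
  set c : m → ℝ := fun i => ⟪WithLp.toLp 2 x, b i⟫
  have hexpand (y : m → ℝ) : x ⬝ᵥ y = ∑ i, c i * ⟪b i, WithLp.toLp 2 y⟫ := by
    rw [b.sum_inner_mul_inner, EuclideanSpace.inner_toLp_toLp, star_trivial, dotProduct_comm]
  have hAx (i : m) : ⟪b i, WithLp.toLp 2 (A *ᵥ x)⟫ = hA.eigenvalues i * c i := by
    have hsymm : Aᵀ = A := by simpa using hA.eq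
    simp only [c, EuclideanSpace.inner_eq_star_dotProduct, star_trivial]
    rw [dotProduct_comm, dotProduct_mulVec, ← mulVec_transpose, hsymm,
      hA.mulVec_eigenvectorBasis, smul_dotProduct, smul_eq_mul]
  have hbdd : BddAbove (Set.range hA.eigenvalues) := (Set.finite_range _).bddAbove
  calc x ⬝ᵥ A *ᵥ x = ∑ i, hA.eigenvalues i * c i ^ 2 := by
        simp only [hexpand, hAx]; congr! 1 with i; ring
    _ ≤ ∑ i, (⨆ j, hA.eigenvalues j) * c i ^ 2 := by
        gcongr with i; exact le_ciSup hbdd i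
    _ = (⨆ i, hA.eigenvalues i) * (x ⬝ᵥ x) := by
        rw [← mul_sum, hexpand x]; simp only [c, sq, real_inner_comm]

section Spectral

variable {V : Type*} [Fintype V] (G : SimpleGraph V)

theorem adjMat_eq_adjMatrix [DecidableRel G.Adj] : adjMat G = G.adjMatrix ℝ := by
  unfold adjMat; congr

theorem deg_eq_degree [DecidableRel G.Adj] (v : V) : deg G v = G.degree v := by
  rw [deg, ← SimpleGraph.card_neighborSet_eq_degree, Set.ncard_eq_toFinset_card',
    Set.toFinset_card]

theorem exists_deg_eq_maxDeg [Nonempty V] : ∃ v, deg G v = maxDeg G := by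
  obtain ⟨v, hv⟩ := Finite.exists_max (deg G)
  exact ⟨v, le_antisymm (le_ciSup (Set.finite_range _).bddAbove v) (ciSup_le hv)⟩

theorem sum_ite_adj [DecidableRel G.Adj] (v : V) (f : V → ℝ) :
    ∑ u, (if G.Adj v u then f u else 0) = ∑ u ∈ G.neighborFinset v, f u := by
  rw [← sum_filter, SimpleGraph.neighborFinset_eq_filter]

variable [DecidableEq V]

theorem dotProduct_mulVec_adjMat_le (x : V → ℝ) :
    x ⬝ᵥ adjMat G *ᵥ x ≤ lambda1 G * (x ⬝ᵥ x) :=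
  (adjMat_isHermitian G).dotProduct_mulVec_le_iSup_eigenvalues_mul x

theorem lambda1_nonneg [Nonempty V] : 0 ≤ lambda1 G := by
  classical
  obtain ⟨v⟩ := ‹Nonempty V›
  simpa [adjMat_eq_adjMatrix] using dotProduct_mulVec_adjMat_le G (Pi.single v 1)

def starVector [DecidableRel G.Adj] (v : V) : V → ℝ :=
  fun u => if u = v then √(G.degree v) else if G.Adj v u then 1 else 0

section StarVector

variable [DecidableRel G.Adj] (v : V)

theorem starVector_nonneg (u : V) : 0 ≤ starVector G v u := by
  unfold starVector; positivity

theorem starVector_dotProduct_self : starVector G v ⬝ᵥ starVector G v = 2 * G.degree v := by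
  have hsq (u : V) : starVector G v u * starVector G v u
      = (if u = v then (G.degree v : ℝ) else 0) + (if G.Adj v u then 1 else 0) := by
    by_cases huv : u = v
    · subst huv
      simp only [starVector, if_true, G.irrefl, if_false, add_zero]
      exact Real.mul_self_sqrt (Nat.cast_nonneg _)
    · by_cases hvu : G.Adj v u <;> simp [starVector, huv, hvu]
  rw [dotProduct, sum_congr rfl fun u _ => hsq u, sum_add_distrib, sum_ite_eq',
    if_pos (mem_univ v), sum_ite_adj]
  simp; ring

theorem le_starVector_mul_mulVec_starVector (u : V) :
    (if u = v then G.degree v * √(G.degree v) else 0) + (if G.Adj v u then √(G.degree v) else 0)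
      ≤ starVector G v u * (adjMat G *ᵥ starVector G v) u := by
  rw [adjMat_eq_adjMatrix, SimpleGraph.adjMatrix_mulVec_apply]
  by_cases huv : u = v
  · subst huv
    have hrow : ∑ w ∈ G.neighborFinset u, starVector G u w = G.degree u := by
      rw [sum_congr rfl fun w hw => (show starVector G u w = 1 by
        have hadj := (G.mem_neighborFinset u w).1 hw
        simp [starVector, hadj, (G.ne_of_adj hadj).symm])]
      simp
    rw [hrow]
    simp [starVector, mul_comm]
  · by_cases hvu : G.Adj v u
    · rw [if_neg huv, if_pos hvu, zero_add, show starVector G v u = 1 by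
        simp [starVector, huv, hvu], one_mul]
      calc √(G.degree v) = starVector G v v := by simp [starVector]
        _ ≤ _ := single_le_sum (fun w _ => starVector_nonneg G v w)
          ((G.mem_neighborFinset u v).2 hvu.symm)
    · simp [huv, hvu, starVector]

theorem two_mul_degree_mul_sqrt_le_starVector :
    2 * G.degree v * √(G.degree v) ≤ starVector G v ⬝ᵥ adjMat G *ᵥ starVector G v :=
  calc 2 * G.degree v * √(G.degree v)
      = ∑ u, ((if u = v then G.degree v * √(G.degree v) else 0)
          + (if G.Adj v u then √(G.degree v) else 0)) := by
        rw [sum_add_distrib, sum_ite_eq', if_pos (mem_univ v), sum_ite_adj]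
        simp; ring
    _ ≤ _ := sum_le_sum fun u _ => le_starVector_mul_mulVec_starVector G v u

theorem sqrt_degree_le_lambda1 : √(G.degree v) ≤ lambda1 G := by
  have : Nonempty V := ⟨v⟩
  obtain hD | hD := (Nat.cast_nonneg (G.degree v) : (0 : ℝ) ≤ G.degree v).eq_or_lt
  · rw [← hD, Real.sqrt_zero]
    exact lambda1_nonneg G
  have hrayleigh := dotProduct_mulVec_adjMat_le G (starVector G v)
  rw [starVector_dotProduct_self] at hrayleigh
  have := two_mul_degree_mul_sqrt_le_starVector G v
  exact le_of_mul_le_mul_left (by linarith) (by positivity : (0 : ℝ) < 2 * G.degree v)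

end StarVector

theorem sqrt_maxDeg_le_lambda1 [Nonempty V] : √(maxDeg G) ≤ lambda1 G := by
  classical
  obtain ⟨v, hv⟩ := exists_deg_eq_maxDeg G
  rw [← hv, deg_eq_degree]
  exact sqrt_degree_le_lambda1 G v

theorem two_mul_card_edgeFinset_le [DecidableRel G.Adj] :
    2 * (#G.edgeFinset : ℝ) ≤ lambda1 G * Fintype.card V := by
  have h := dotProduct_mulVec_adjMat_le G 1
  rw [adjMat_eq_adjMatrix, dotProduct_comm, ← SimpleGraph.natCast_card_dart_eq_dotProduct,
    SimpleGraph.dart_card_eq_twice_card_edges] at h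
  simpa using h

end Spectral

instance (n : ℕ) : DecidableRel (cubeGraph n).Adj :=
  fun x y => inferInstanceAs (Decidable (hammingDist x y = 1))

instance (n : ℕ) (ω : Sym2 (Fin n → Bool) → Bool) : DecidableRel (randCube n ω).Adj :=
  fun x y => inferInstanceAs (Decidable ((cubeGraph n).Adj x y ∧ ω s(x, y) = true))

theorem cubeGraph_adj_iff {n : ℕ} {x y : Fin n → Bool} :
    (cubeGraph n).Adj x y ↔ ∃ i, y = Function.update x i (!x i) := by
  change #{i | x i ≠ y i} = 1 ↔ _
  simp only [card_eq_one, Finset.ext_iff, mem_filter, mem_univ, true_and, mem_singleton,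
    funext_iff, Function.update_apply]
  refine exists_congr fun i => forall_congr' fun j => ?_
  by_cases h : j = i
  · subst h; cases x j <;> cases y j <;> simp
  · cases x j <;> cases y j <;> simp [h]

theorem degree_cubeGraph (n : ℕ) (x : Fin n → Bool) : (cubeGraph n).degree x = n := by
  have hnbr : (cubeGraph n).neighborFinset x = univ.image fun i => Function.update x i (!x i) := by
    ext y; simp [cubeGraph_adj_iff, eq_comm]
  have hinj : Function.Injective fun i => Function.update x i (!x i) := by
    intro i j hij
    by_contra hne
    simpa [Function.update_of_ne hne] using congrFun hij i
  rw [← SimpleGraph.card_neighborFinset_eq_degree, hnbr, card_image_of_injective _ hinj,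
    card_univ, Fintype.card_fin]

theorem two_mul_card_edgeFinset_cubeGraph (n : ℕ) :
    2 * #(cubeGraph n).edgeFinset = 2 ^ n * n := by
  rw [← SimpleGraph.sum_degrees_eq_twice_card_edges]
  simp [degree_cubeGraph]

theorem edgeFinset_randCube (n : ℕ) (ω : Sym2 (Fin n → Bool) → Bool) :
    (randCube n ω).edgeFinset = {e ∈ (cubeGraph n).edgeFinset | ω e = true} := by
  ext e
  induction e using Sym2.ind
  simp only [SimpleGraph.mem_edgeFinset, mem_filter, SimpleGraph.mem_edgeSet]
  rfl

theorem card_edgeFinset_randCube (n : ℕ) (ω : Sym2 (Fin n → Bool) → Bool) :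
    #(randCube n ω).edgeFinset = ∑ e ∈ (cubeGraph n).edgeFinset, (ω e).toNat := by
  rw [edgeFinset_randCube, card_filter]
  congr! with e; cases ω e <;> rfl

section Binomial

variable {ι : Type*} [Fintype ι] (ν : Measure Bool) [IsProbabilityMeasure ν]

theorem integral_bool_toNat : ∫ b, (b.toNat : ℝ) ∂ν = ν.real {true} := by
  simp [integral_fintype]

theorem integral_toNat_eval_pi (i : ι) :
    ∫ ω, ((ω i).toNat : ℝ) ∂Measure.pi (fun _ : ι => ν) = ν.real {true} := by
  calc _ = ∫ b, (b.toNat : ℝ) ∂(Measure.pi (fun _ : ι => ν)).map (Function.eval i) :=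
        (integral_map (measurable_pi_apply i).aemeasurable
          Measurable.of_discrete.aestronglyMeasurable).symm
    _ = _ := by rw [(measurePreserving_eval _ i).map_eq, integral_bool_toNat]

theorem variance_toNat_eval_pi_le (i : ι) :
    Var[fun ω => ((ω i).toNat : ℝ); Measure.pi (fun _ : ι => ν)] ≤ ν.real {true} := by
  refine (variance_le_expectation_sq Measurable.of_discrete.aestronglyMeasurable).trans_eq ?_
  rw [← integral_toNat_eval_pi ν i]
  congr 1 with ω
  simp only [Pi.pow_apply]
  cases ω i <;> norm_num

theorem meas_le_abs_sum_toNat_sub_le (s : Finset ι) {c : ℝ} (hc : 0 < c) :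
    Measure.pi (fun _ : ι => ν) {ω | c ≤ |∑ i ∈ s, ((ω i).toNat : ℝ) - #s * ν.real {true}|}
      ≤ ENNReal.ofReal (#s * ν.real {true} / c ^ 2) := by
  set μ := Measure.pi (fun _ : ι => ν)
  set X : ι → (ι → Bool) → ℝ := fun i ω => ((ω i).toNat : ℝ)
  have hmean : μ[∑ i ∈ s, X i] = #s * ν.real {true} := by
    rw [Finset.sum_fn, integral_finsetSum _ fun i _ => Integrable.of_finite]
    simp only [X, μ, integral_toNat_eval_pi, sum_const, nsmul_eq_mul]
  have hindep : iIndepFun X μ := iIndepFun_pi (X := fun _ (b : Bool) => (b.toNat : ℝ))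
    fun _ => Measurable.of_discrete.aemeasurable
  have hvar : Var[∑ i ∈ s, X i; μ] ≤ #s * ν.real {true} := by
    rw [IndepFun.variance_sum (fun i _ => MemLp.of_discrete)
      fun i _ j _ hij => hindep.indepFun hij]
    simpa using sum_le_sum fun i _ => variance_toNat_eval_pi_le ν i
  have hcheb := meas_ge_le_variance_div_sq (μ := μ) (X := ∑ i ∈ s, X i) MemLp.of_discrete hc
  rw [hmean] at hcheb
  refine le_trans ?_ (hcheb.trans (ENNReal.ofReal_le_ofReal (by gcongr)))
  simp [X]

theorem meas_sum_toNat_lt_le (s : Finset ι) {ε : ℝ} (hε : 0 < ε)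
    (hs : 0 < #s * ν.real {true}) :
    Measure.pi (fun _ : ι => ν)
        {ω | ∑ i ∈ s, ((ω i).toNat : ℝ) < (1 - ε) * (#s * ν.real {true})}
      ≤ ENNReal.ofReal (ε ^ 2 * (#s * ν.real {true}))⁻¹ := by
  calc _ ≤ Measure.pi (fun _ : ι => ν) {ω | ε * (#s * ν.real {true})
          ≤ |∑ i ∈ s, ((ω i).toNat : ℝ) - #s * ν.real {true}|} := by
        refine measure_mono fun ω hω => ?_
        simp only [Set.mem_ofPred_eq] at hω ⊢
        rw [abs_sub_comm, le_abs]; left; linarith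
    _ ≤ _ := meas_le_abs_sum_toNat_sub_le ν s (by positivity)
    _ = _ := by congr 1; field_simp

end Binomial

set_option linter.deprecated false in
theorem PMF.toMeasure_bernoulli_real_true {q : ℝ} (h0 : 0 ≤ q) (h1 : q ≤ 1) :
    (PMF.bernoulli (min q.toNNReal 1) (min_le_right _ _)).toMeasure.real {true} = q := by
  simp [Measure.real, PMF.toMeasure_apply_singleton _ _ (measurableSet_singleton _),
    PMF.bernoulli_apply, Real.toNNReal_le_one.2 h1, h0]

instance (n : ℕ) (q : ℝ) : IsProbabilityMeasure (cubeMeasure n q) := by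
  unfold cubeMeasure; infer_instance

theorem lambda1_randCube_ge_of_card_edgeFinset_ge {n : ℕ} {ω : Sym2 (Fin n → Bool) → Bool}
    {q ε : ℝ} (hε : 0 ≤ ε)
    (h : (1 - ε) * (#(cubeGraph n).edgeFinset * q) ≤ #(randCube n ω).edgeFinset) :
    (1 - ε) * max √(maxDeg (randCube n ω)) (n * q) ≤ lambda1 (randCube n ω) := by
  have hnq : (1 - ε) * (n * q) ≤ lambda1 (randCube n ω) := by
    have hcard := two_mul_card_edgeFinset_le (randCube n ω)
    have hcube : 2 * (#(cubeGraph n).edgeFinset : ℝ) = 2 ^ n * n := by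
      exact_mod_cast two_mul_card_edgeFinset_cubeGraph n
    simp only [Fintype.card_fun, Fintype.card_bool, Fintype.card_fin, Nat.cast_pow,
      Nat.cast_ofNat] at hcard
    refine le_of_mul_le_mul_right ?_ (by positivity : (0 : ℝ) < 2 ^ n)
    linear_combination 2 * h + hcard - (1 - ε) * q * hcube
  have hsqrt : (1 - ε) * √(maxDeg (randCube n ω)) ≤ lambda1 (randCube n ω) :=
    (mul_le_of_le_one_left (Real.sqrt_nonneg _) (by linarith)).trans (sqrt_maxDeg_le_lambda1 _)
  rcases le_total √(maxDeg (randCube n ω)) (n * q) with hle | hle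
  · rwa [max_eq_right hle]
  · rwa [max_eq_left hle]

theorem tendsto_measure_nhds_one_of_compl_le {Ω : ℕ → Type*} [∀ n, MeasurableSpace (Ω n)]
    {μ : ∀ n, Measure (Ω n)} [∀ n, IsProbabilityMeasure (μ n)] {s : ∀ n, Set (Ω n)}
    (hs : ∀ n, MeasurableSet (s n)) {b : ℕ → ℝ≥0∞} (hb : Tendsto b atTop (nhds 0))
    (hsb : ∀ᶠ n in atTop, μ n (s n)ᶜ ≤ b n) :
    Tendsto (fun n => μ n (s n)) atTop (nhds 1) := by
  have hcompl : Tendsto (fun n => μ n (s n)ᶜ) atTop (nhds 0) :=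
    tendsto_of_tendsto_of_tendsto_of_le_of_le' tendsto_const_nhds hb
      (.of_forall fun _ => zero_le) hsb
  have := ENNReal.Tendsto.sub (tendsto_const_nhds (x := 1)) hcompl (.inl ENNReal.one_ne_top)
  simpa only [tsub_zero, prob_compl_eq_one_sub (hs _),
    ENNReal.sub_sub_cancel ENNReal.one_ne_top prob_le_one] using this

theorem cubeMeasure_compl_le {n : ℕ} {q ε : ℝ} (hq₀ : 0 ≤ q) (hq₁ : q ≤ 1) (hε : 0 < ε)
    (hmean : 0 < #(cubeGraph n).edgeFinset * q) :
    cubeMeasure n q {ω | (1 - ε) * max √(maxDeg (randCube n ω)) (n * q)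
        ≤ lambda1 (randCube n ω)}ᶜ
      ≤ ENNReal.ofReal (ε ^ 2 * (#(cubeGraph n).edgeFinset * q))⁻¹ := by
  have hν := PMF.toMeasure_bernoulli_real_true hq₀ hq₁
  calc _ ≤ cubeMeasure n q {ω | ∑ e ∈ (cubeGraph n).edgeFinset, ((ω e).toNat : ℝ)
          < (1 - ε) * (#(cubeGraph n).edgeFinset * q)} := by
        refine measure_mono fun ω hω => ?_
        simp only [Set.mem_compl_iff, Set.mem_ofPred_eq] at hω ⊢
        contrapose! hω
        refine lambda1_randCube_ge_of_card_edgeFinset_ge hε.le ?_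
        rw [card_edgeFinset_randCube]
        push_cast
        exact hω
    _ ≤ _ := by
        have := meas_sum_toNat_lt_le _ (cubeGraph n).edgeFinset hε (by rwa [hν])
        rwa [hν] at this

/-- if `p ≫ n⁻¹ 2⁻ⁿ` then a.s. `λ1(G) ≥ (1+o(1)) max(√Δ, np)`:
for every `ε > 0`, `Pr[λ1(G) ≥ (1-ε) max(√Δ, np)] → 1`. -/
theorem lambda1_random_cube_lower (p : ℕ → ℝ) (hp : ∀ n, 0 ≤ p n ∧ p n ≤ 1)
    (hgrow : Tendsto (fun n : ℕ => p n * n * 2 ^ n) atTop atTop)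
    (ε : ℝ) (hε : 0 < ε) :
    Tendsto (fun n : ℕ =>
      cubeMeasure n (p n) {ω |
        (1 - ε) * max (Real.sqrt (maxDeg (randCube n ω))) ((n : ℝ) * p n)
          ≤ lambda1 (randCube n ω)})
      atTop (nhds 1) := by
  set N : ℕ → ℝ := fun n => #(cubeGraph n).edgeFinset * p n
  have hN_top : Tendsto N atTop atTop := by
    refine (hgrow.atTop_div_const two_pos).congr fun n => ?_
    have hcube : 2 * (#(cubeGraph n).edgeFinset : ℝ) = 2 ^ n * n := by
      exact_mod_cast two_mul_card_edgeFinset_cubeGraph n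
    rw [div_eq_iff two_ne_zero]
    linear_combination -p n * hcube
  refine tendsto_measure_nhds_one_of_compl_le (μ := fun n => cubeMeasure n (p n))
    (fun _ => MeasurableSet.of_discrete) (b := fun n => ENNReal.ofReal (ε ^ 2 * N n)⁻¹) ?_ ?_
  · simpa using ENNReal.tendsto_ofReal
      (hN_top.const_mul_atTop (pow_pos hε 2)).inv_tendsto_atTop
  filter_upwards [hN_top.eventually_gt_atTop 0] with n hn
  exact cubeMeasure_compl_le (hp n).1 (hp n).2 hε hn
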